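/- Under the decentralized-memory setup with Huber smoothing, define p(x) = (a/3)∑_{j=1}^{d−1} |⟨e_{j+1} − e_j, x⟩| − (a/3)⟨e_1, x⟩ + c·h_δ(x) with δ = a/(3cd), and let x* = (a/(3cd))·1_d. Then for every i ∈ {1,…,n}, every τ with 0 ≤ τ < τ_com·n(d−1)/6, and every x ∈ mem_i(τ), one has p(x) − p(x*) ≥ a²/(18cd). -/

import Mathlib

open scoped BigOperators RealInnerProductSpace Classical

noncomputable section

/-- The `k`-th standard basis vector of `ℝ^d`, `0`-indexed (so the paper's `e_k` is
`stdBasis d (k-1)`); out-of-range indices give `0`. -/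
def stdBasis (d j : ℕ) : EuclideanSpace ℝ (Fin d) :=
  if h : j < d then EuclideanSpace.single ⟨j, h⟩ 1 else 0

/-- Scalar Huber function. -/
def huber1 (δ t : ℝ) : ℝ := if |t| ≤ δ then t ^ 2 / 2 else δ * |t| - δ ^ 2 / 2

/-- Huber function on `ℝ^d`: `h_δ(x) = ∑_{j=1}^d h_δ^j(⟨e_j, x⟩)`. -/
def huber (d : ℕ) (δ : ℝ) (x : EuclideanSpace ℝ (Fin d)) : ℝ :=
  ∑ j ∈ Finset.range d, huber1 δ ⟪stdBasis d j, x⟫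

/-- The subgradient oracle `∇̂h_j` (paper's `1`-indexed `j`, so `e_{j+1} = stdBasis d j`
and `e_j = stdBasis d (j-1)`). -/
def gradh (d j : ℕ) (x : EuclideanSpace ℝ (Fin d)) : EuclideanSpace ℝ (Fin d) :=
  if ⟪stdBasis d (j - 1), x⟫ < ⟪stdBasis d j, x⟫ then stdBasis d j - stdBasis d (j - 1)
  else if ⟪stdBasis d j, x⟫ < ⟪stdBasis d (j - 1), x⟫ then stdBasis d (j - 1) - stdBasis d j
  else 0

/-- The subgradient oracle `∇̂f_i` in the Huber-smoothed setting
(nodes `i` are `1`-indexed, `i ∈ {1,…,n}`); `gradient (huber d δ)` is `∇h_δ`. -/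
def oracleH (d n : ℕ) (a δ : ℝ) (i : ℕ) (x : EuclideanSpace ℝ (Fin d)) :
    EuclideanSpace ℝ (Fin d) :=
  gradient (huber d δ) x +
    (if i ≤ n / 3 then
      a • (∑ j ∈ Finset.Icc 1 ((d - 1) / 2), gradh d (2 * j - 1) x) - a • stdBasis d 0
    else if i ≤ 2 * n / 3 then
      a • ∑ j ∈ Finset.Icc 1 ((d - 1) / 2), gradh d (2 * j) x
    else 0)

/-- The time-varying center node `i_c(τ) = 2n/3 + 1 + (⌊τ/τ_com⌋ mod (n/3))`. -/
def center (n : ℕ) (τcom τ : ℝ) : ℕ := 2 * n / 3 + 1 + (⌊τ / τcom⌋₊ % (n / 3))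

/-- The set of `j` such that `(j, i) ∈ E(τ)` for the star graph with center `i_c(τ)`. -/
def inEdges (n : ℕ) (τcom τ : ℝ) (i : ℕ) : Set ℕ :=
  {j | 1 ≤ j ∧ j ≤ n ∧
    ((j = center n τcom τ ∧ i ≠ center n τcom τ) ∨
     (i = center n τcom τ ∧ j ≠ center n τcom τ))}

/-- `memloc_i(τ)`: memory obtainable by a local subgradient computation. -/
def memloc (d : ℕ) (τsub : ℝ)
    (gfun : ℕ → EuclideanSpace ℝ (Fin d) → EuclideanSpace ℝ (Fin d))
    (mem : ℕ → ℝ → Set (EuclideanSpace ℝ (Fin d))) (i : ℕ) (τ : ℝ) :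
    Set (EuclideanSpace ℝ (Fin d)) :=
  if τsub ≤ τ then
    ↑(Submodule.span ℝ (mem i (τ - τsub) ∪ (gfun i '' mem i (τ - τsub))))
  else ∅

/-- `memcom_i(τ)`: memory obtainable by decentralized communication. -/
def memcom (d n : ℕ) (τcom : ℝ)
    (mem : ℕ → ℝ → Set (EuclideanSpace ℝ (Fin d))) (i : ℕ) (τ : ℝ) :
    Set (EuclideanSpace ℝ (Fin d)) :=
  if τcom ≤ τ then
    ↑(Submodule.span ℝ (⋃ j ∈ inEdges n τcom τ i, mem j (τ - τcom)))
  else ∅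

/-!
Every memory stays inside a prefix subspace `K_k`. Since `h_δ` is even in each coordinate, its
gradient vanishes in every coordinate where the point does, so `∇h_δ` preserves `K_k`; a node of
`V₁` can only extend a prefix of odd length and a node of `V₂` one of even length, while a node
of `V₃` merely relays. Alternating between `V₁` and `V₂` requires passing through the center, which
passes on only what it gathered at its previous turn `n/3` windows earlier, so the prefix grows by
at most one every `n/3` windows. Before time `τ_com n(d-1)/6` all memories therefore lie in
`K_{d-1}`, where `p ≥ 0` by telescoping, whereas `p(x*) = -a²/(18cd)`.
-/

/-- The paper's `K_k = span{e_1, …, e_k}`, described by the vanishing of the later coordinates. -/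
def prefixSpan (d k : ℕ) : Submodule ℝ (EuclideanSpace ℝ (Fin d)) where
  carrier := {x | ∀ j, k ≤ j → ⟪stdBasis d j, x⟫ = 0}
  add_mem' hx hy j hj := by rw [inner_add_right, hx j hj, hy j hj, add_zero]
  zero_mem' _ _ := inner_zero_right _
  smul_mem' c x hx j hj := by rw [inner_smul_right, hx j hj, mul_zero]

lemma prefixSpan_mono (d : ℕ) : Monotone (prefixSpan d) :=
  fun _ _ hkl _ hx j hj => hx j (hkl.trans hj)

lemma inner_stdBasis {d j : ℕ} (hj : j < d) (x : EuclideanSpace ℝ (Fin d)) :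
    ⟪stdBasis d j, x⟫ = x ⟨j, hj⟩ := by
  simp [stdBasis, hj, EuclideanSpace.inner_single_left]

lemma inner_stdBasis_stdBasis_of_ne {d i j : ℕ} (hij : i ≠ j) :
    ⟪stdBasis d i, stdBasis d j⟫ = 0 := by
  unfold stdBasis
  split_ifs <;> simp [EuclideanSpace.inner_single_left, hij.symm]

lemma stdBasis_mem_prefixSpan {d j k : ℕ} (hjk : j < k) : stdBasis d j ∈ prefixSpan d k :=
  fun _ hl => inner_stdBasis_stdBasis_of_ne (by omega)

lemma huber1_neg (δ t : ℝ) : huber1 δ (-t) = huber1 δ t := by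
  simp [huber1]

lemma huber1_nonneg {δ : ℝ} (hδ : 0 ≤ δ) (t : ℝ) : 0 ≤ huber1 δ t := by
  unfold huber1
  split_ifs with ht
  · positivity
  · nlinarith [abs_nonneg t]

lemma huber_nonneg {d : ℕ} {δ : ℝ} (hδ : 0 ≤ δ) (x : EuclideanSpace ℝ (Fin d)) :
    0 ≤ huber d δ x :=
  Finset.sum_nonneg fun _ _ => huber1_nonneg hδ _

lemma fderiv_apply_eq_zero_of_invariant {E : Type*} [NormedAddCommGroup E] [NormedSpace ℝ E]
    {f : E → ℝ} (σ : E ≃L[ℝ] E) (hf : f ∘ σ = f)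
    {x v : E} (hx : σ x = x) (hv : σ v = -v) : fderiv ℝ f x v = 0 := by
  have h := congrArg (fun L : E →L[ℝ] ℝ => L v) (σ.comp_right_fderiv (f := f) (x := x))
  simp only [hf, hx, ContinuousLinearMap.comp_apply, ContinuousLinearEquiv.coe_coe, hv,
    map_neg] at h
  exact self_eq_neg.1 h

abbrev coordReflection (d j : ℕ) : EuclideanSpace ℝ (Fin d) ≃ₗᵢ[ℝ] EuclideanSpace ℝ (Fin d) :=
  (ℝ ∙ stdBasis d j)ᗮ.reflection

lemma huber_comp_coordReflection (d j : ℕ) (δ : ℝ) :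
    huber d δ ∘ coordReflection d j = huber d δ := by
  funext x
  simp only [Function.comp_apply, huber]
  refine Finset.sum_congr rfl fun l _ => ?_
  rw [← LinearIsometryEquiv.inner_map_map (coordReflection d j), Submodule.reflection_reflection]
  rcases eq_or_ne l j with rfl | hlj
  · rw [Submodule.reflection_orthogonalComplement_singleton_eq_neg, inner_neg_left, huber1_neg]
  · rw [Submodule.reflection_mem_subspace_eq_self
      (Submodule.mem_orthogonal_singleton_iff_inner_right.2 (inner_stdBasis_stdBasis_of_ne hlj.symm))]

lemma gradient_huber_mem_prefixSpan {d k : ℕ} {δ : ℝ} {x : EuclideanSpace ℝ (Fin d)}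
    (hx : x ∈ prefixSpan d k) : gradient (huber d δ) x ∈ prefixSpan d k := by
  intro j hj
  rw [gradient, real_inner_comm, InnerProductSpace.toDual_symm_apply]
  exact fderiv_apply_eq_zero_of_invariant (coordReflection d j).toContinuousLinearEquiv
    (huber_comp_coordReflection d j δ)
    (Submodule.reflection_mem_subspace_eq_self
      (Submodule.mem_orthogonal_singleton_iff_inner_right.2 (hx j hj)))
    (Submodule.reflection_orthogonalComplement_singleton_eq_neg _)

lemma gradh_mem_prefixSpan_of_ne {d j k : ℕ} {x : EuclideanSpace ℝ (Fin d)}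
    (hx : x ∈ prefixSpan d k) (hjk : j ≠ k) : gradh d j x ∈ prefixSpan d k := by
  rcases lt_or_gt_of_ne hjk with hlt | hgt
  · have hj : stdBasis d j ∈ prefixSpan d k := stdBasis_mem_prefixSpan hlt
    have hj' : stdBasis d (j - 1) ∈ prefixSpan d k := stdBasis_mem_prefixSpan (by omega)
    unfold gradh
    split_ifs
    exacts [sub_mem hj hj', sub_mem hj' hj, zero_mem _]
  · simp [gradh, hx j hgt.le, hx (j - 1) (by omega)]

lemma oracleH_mem_prefixSpan {d n k i : ℕ} {a δ : ℝ} {x : EuclideanSpace ℝ (Fin d)}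
    (hx : x ∈ prefixSpan d k) (h₁ : i ≤ n / 3 → Even k ∧ k ≠ 0)
    (h₂ : n / 3 < i → i ≤ 2 * n / 3 → Odd k) : oracleH d n a δ i x ∈ prefixSpan d k := by
  refine add_mem (gradient_huber_mem_prefixSpan hx) ?_
  split_ifs with hi₁ hi₂
  · obtain ⟨hk, hk₀⟩ := h₁ hi₁
    refine sub_mem (Submodule.smul_mem _ _ (sum_mem fun j _ => ?_))
      (Submodule.smul_mem _ _ (stdBasis_mem_prefixSpan (Nat.pos_of_ne_zero hk₀)))
    exact gradh_mem_prefixSpan_of_ne hx fun h => Nat.not_even_iff_odd.2 ⟨j - 1, by omega⟩ (h ▸ hk)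
  · have hk := h₂ (by omega) hi₂
    refine Submodule.smul_mem _ _ (sum_mem fun j _ => ?_)
    exact gradh_mem_prefixSpan_of_ne hx fun h => Nat.not_even_iff_odd.2 hk ⟨j, h ▸ by ring⟩
  · exact zero_mem _

/-- With `n = 3m` nodes, node `i` knows at most the prefix `K_{level m i w}` during communication
window `w`. For a node of `V₃`, `(w + 3m + 1 - i) / m` is the number of windows `≤ w` in which it
has been the center. -/
def level (m i w : ℕ) : ℕ :=
  if i ≤ m then 2 * ((w / m + 2) / 2)
  else if i ≤ 2 * m then 2 * ((w / m + 1) / 2) + 1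
  else (w + 3 * m + 1 - i) / m + 1

lemma level_mono (m i : ℕ) : Monotone (level m i) := by
  intro w w' hw
  have h₁ := Nat.div_le_div_right (c := m) hw
  have h₂ := Nat.div_le_div_right (c := m) (show w + 3 * m + 1 - i ≤ w' + 3 * m + 1 - i by omega)
  unfold level
  split_ifs <;> omega

lemma div_add_one_le_level {m i : ℕ} (hi : i ≤ 3 * m) (w : ℕ) : w / m + 1 ≤ level m i w := by
  have := Nat.div_le_div_right (c := m) (show w ≤ w + 3 * m + 1 - i by omega)
  unfold level
  split_ifs <;> omega

lemma level_le_div_add_two {m : ℕ} (hm : 1 ≤ m) (i w : ℕ) : level m i w ≤ w / m + 2 := by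
  unfold level
  split_ifs with h₁ h₂
  · omega
  · omega
  · have := Nat.div_le_div_right (c := m) (show w + 3 * m + 1 - i ≤ w + m by omega)
    rw [Nat.add_div_right w hm] at this
    omega

lemma even_level {m i : ℕ} (hi : i ≤ m) (w : ℕ) : Even (level m i w) ∧ level m i w ≠ 0 := by
  simp only [level, if_pos hi]
  exact ⟨even_two_mul _, by have := Nat.zero_le (w / m); omega⟩

lemma odd_level {m i : ℕ} (hi₁ : m < i) (hi₂ : i ≤ 2 * m) (w : ℕ) : Odd (level m i w) := by
  simp only [level, if_neg hi₁.not_ge, if_pos hi₂]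
  exact odd_two_mul_add_one _

lemma level_center {m : ℕ} (hm : 1 ≤ m) (w : ℕ) : level m (2 * m + 1 + w % m) w = w / m + 2 := by
  have hw := Nat.div_add_mod w m
  have hmod := Nat.mod_lt w hm
  have h : w + 3 * m + 1 - (2 * m + 1 + w % m) = m * (w / m + 1) := by rw [mul_add]; omega
  simp only [level, h, Nat.mul_div_cancel_left _ hm]
  split_ifs <;> omega

lemma level_center_pred {m w : ℕ} (hm : 1 ≤ m) (hw : 1 ≤ w) :
    level m (2 * m + 1 + w % m) (w - 1) = w / m + 1 := by
  have hdm := Nat.div_add_mod' w m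
  have hmod := Nat.mod_lt w hm
  have h : (w - 1 + 3 * m + 1 - (2 * m + 1 + w % m)) / m = w / m :=
    Nat.div_eq_of_lt_le (by omega) (by rw [Nat.add_mul, one_mul]; omega)
  simp only [level, h]
  split_ifs <;> omega

/-- The center passes on only what it gathered at its previous turn, `m` windows earlier. -/
lemma level_pred_le_of_center {m i j w : ℕ} (hm : 1 ≤ m) (hw : 1 ≤ w) (hi : i ≤ 3 * m)
    (h : j = 2 * m + 1 + w % m ∨ i = 2 * m + 1 + w % m) : level m j (w - 1) ≤ level m i w := by
  rcases h with rfl | rfl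
  · rw [level_center_pred hm hw]
    exact div_add_one_le_level hi w
  · rw [level_center hm]
    have := Nat.div_le_div_right (c := m) (Nat.sub_le w 1)
    have := level_le_div_add_two hm j (w - 1)
    omega

lemma level_le_sub_one {m d i w : ℕ} (hm : 1 ≤ m) (hd : 3 ≤ d) (hw : 2 * w < m * (d - 1)) :
    level m i w ≤ d - 1 := by
  have hdiv : m * (2 * (w / m)) < m * (d - 1) := by
    have := Nat.div_mul_le_self w m
    rw [show m * (2 * (w / m)) = 2 * (w / m * m) by ring]
    omega
  have := Nat.lt_of_mul_lt_mul_left hdiv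
  have := level_le_div_add_two hm i w
  omega

theorem mem_subset_of_invariant {d n : ℕ} {τcom τsub : ℝ} (hcom : 0 < τcom) (hsub : 0 < τsub)
    {g : ℕ → EuclideanSpace ℝ (Fin d) → EuclideanSpace ℝ (Fin d)}
    {mem : ℕ → ℝ → Set (EuclideanSpace ℝ (Fin d))}
    (hmem : ∀ i τ, 0 ≤ τ →
      mem i τ ⊆ {0} ∪ memloc d τsub g mem i τ ∪ memcom d n τcom mem i τ)
    (S : ℕ → ℕ → Submodule ℝ (EuclideanSpace ℝ (Fin d)))
    (hS_mono : ∀ i ≤ n, Monotone (S i))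
    (hS_oracle : ∀ i ≤ n, ∀ w, ∀ x ∈ S i w, g i x ∈ S i w)
    (hS_comm : ∀ i ≤ n, ∀ τ, τcom ≤ τ → ∀ j ∈ inEdges n τcom τ i,
      S j (⌊τ / τcom⌋₊ - 1) ≤ S i ⌊τ / τcom⌋₊)
    {i : ℕ} (hi : i ≤ n) {τ : ℝ} (hτ : 0 ≤ τ) : mem i τ ⊆ S i ⌊τ / τcom⌋₊ := by
  set ε := min τsub τcom
  have hε : 0 < ε := lt_min hsub hcom
  suffices key : ∀ N : ℕ, ∀ i ≤ n, ∀ τ, 0 ≤ τ → τ < N * ε → mem i τ ⊆ S i ⌊τ / τcom⌋₊ from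
    key (⌊τ / ε⌋₊ + 1) i hi τ hτ (by
      have := Nat.lt_floor_add_one (τ / ε)
      rw [div_lt_iff₀ hε] at this
      exact_mod_cast this)
  intro N
  induction N with
  | zero => intro i _ τ hτ hN; simp at hN; linarith
  | succ N ih =>
    intro i hi τ hτ hN x hx
    rcases hmem i τ hτ hx with (h₀ | hloc) | hcomm
    · rw [Set.mem_singleton_iff.1 h₀]
      exact zero_mem _
    · have hτsub : τsub ≤ τ := by by_contra h; simp [memloc, h] at hloc
      rw [memloc, if_pos hτsub] at hloc
      have hprev : mem i (τ - τsub) ⊆ S i ⌊τ / τcom⌋₊ := by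
        refine (ih i hi _ (by linarith) ?_).trans (hS_mono i hi ?_)
        · push_cast at hN
          linarith [min_le_left τsub τcom]
        · exact Nat.floor_le_floor (div_le_div_of_nonneg_right (by linarith) hcom.le)
      refine Submodule.span_le.2 (Set.union_subset hprev ?_) hloc
      rintro _ ⟨y, hy, rfl⟩
      exact hS_oracle i hi _ y (hprev hy)
    · have hτcom : τcom ≤ τ := by by_contra h; simp [memcom, h] at hcomm
      rw [memcom, if_pos hτcom] at hcomm
      have hfloor : ⌊(τ - τcom) / τcom⌋₊ = ⌊τ / τcom⌋₊ - 1 := by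
        rw [sub_div, div_self hcom.ne', Nat.floor_sub_one]
      refine Submodule.span_le.2 (Set.iUnion₂_subset fun j hj => ?_) hcomm
      refine (ih j hj.2.1 _ (by linarith) ?_).trans ?_
      · push_cast at hN
        linarith [min_le_right τsub τcom]
      · rw [hfloor]
        exact hS_comm i hi τ hτcom j hj

theorem mem_subset_prefixSpan_level {d m : ℕ} (hm : 1 ≤ m) {a δ τcom τsub : ℝ}
    (hcom : 0 < τcom) (hsub : 0 < τsub) {mem : ℕ → ℝ → Set (EuclideanSpace ℝ (Fin d))}
    (hmem : ∀ i τ, 0 ≤ τ → mem i τ ⊆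
      {0} ∪ memloc d τsub (oracleH d (3 * m) a δ) mem i τ ∪ memcom d (3 * m) τcom mem i τ)
    {i : ℕ} (hi : i ≤ 3 * m) {τ : ℝ} (hτ : 0 ≤ τ) :
    mem i τ ⊆ prefixSpan d (level m i ⌊τ / τcom⌋₊) := by
  have h₁ : 3 * m / 3 = m := by omega
  have h₂ : 2 * (3 * m) / 3 = 2 * m := by omega
  refine mem_subset_of_invariant hcom hsub hmem (fun i w => prefixSpan d (level m i w))
    (fun i _ => (prefixSpan_mono d).comp (level_mono m i)) (fun i _ w x hx => ?_)
    (fun i hi τ hτ j hj => prefixSpan_mono d ?_) hi hτ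
  · refine oracleH_mem_prefixSpan hx (fun hi₁ => even_level (h₁ ▸ hi₁) w)
      (fun hi₁ hi₂ => odd_level (h₁ ▸ hi₁) (h₂ ▸ hi₂) w)
  · have hw : 1 ≤ ⌊τ / τcom⌋₊ := Nat.le_floor (by rwa [Nat.cast_one, one_le_div hcom])
    obtain ⟨-, -, hcenter⟩ := hj
    simp only [center, h₁, h₂] at hcenter
    exact level_pred_le_of_center hm hw hi (hcenter.imp And.left And.left)

def objective (d : ℕ) (a c δ : ℝ) (x : EuclideanSpace ℝ (Fin d)) : ℝ :=
  (a / 3) * ∑ j ∈ Finset.Icc 1 (d - 1), |⟪stdBasis d j - stdBasis d (j - 1), x⟫|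
    - (a / 3) * ⟪stdBasis d 0, x⟫ + c * huber d δ x

lemma sub_le_sum_abs_sub (f : ℕ → ℝ) (n : ℕ) :
    f 0 - f n ≤ ∑ j ∈ Finset.Icc 1 n, |f j - f (j - 1)| := by
  induction n with
  | zero => simp
  | succ n ih =>
    rw [Finset.sum_Icc_succ_top (by omega), Nat.add_sub_cancel]
    linarith [neg_le_abs (f (n + 1) - f n)]

lemma objective_nonneg {d : ℕ} {a c δ : ℝ} (ha : 0 ≤ a) (hc : 0 ≤ c) (hδ : 0 ≤ δ)
    {x : EuclideanSpace ℝ (Fin d)} (hx : x ∈ prefixSpan d (d - 1)) : 0 ≤ objective d a c δ x := by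
  have htel := sub_le_sum_abs_sub (fun j => ⟪stdBasis d j, x⟫) (d - 1)
  simp only [hx (d - 1) le_rfl, sub_zero] at htel
  simp only [objective, inner_sub_left]
  nlinarith [mul_nonneg hc (huber_nonneg hδ x)]

lemma objective_const {d : ℕ} (hd : 0 < d) (a c : ℝ) {δ : ℝ} (hδ : 0 ≤ δ) :
    objective d a c δ ((WithLp.equiv 2 (Fin d → ℝ)).symm fun _ => δ) =
      -(a / 3) * δ + c * (d * (δ ^ 2 / 2)) := by
  set v : EuclideanSpace ℝ (Fin d) := (WithLp.equiv 2 (Fin d → ℝ)).symm fun _ => δ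
  have hv : ∀ j < d, ⟪stdBasis d j, v⟫ = δ := fun j hj => by rw [inner_stdBasis hj]; rfl
  have hsum : ∑ j ∈ Finset.Icc 1 (d - 1), |⟪stdBasis d j - stdBasis d (j - 1), v⟫| = 0 :=
    Finset.sum_eq_zero fun j hj => by
      rw [Finset.mem_Icc] at hj
      rw [inner_sub_left, hv j (by omega), hv (j - 1) (by omega), sub_self, abs_zero]
  have hhuber : huber d δ v = d * (δ ^ 2 / 2) := by
    rw [huber, Finset.sum_congr rfl fun j hj => by rw [hv j (Finset.mem_range.1 hj)],
      Finset.sum_const, Finset.card_range, nsmul_eq_mul, huber1, if_pos (abs_of_nonneg hδ).le]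
  rw [objective, hsum, hv 0 hd, hhuber]
  ring

theorem stmt11_general (d n : ℕ) (hd : 3 ≤ d) (hn3 : 3 ∣ n)
    (a c τcom τsub : ℝ) (ha : 0 < a) (hc : 0 < c) (hcom : 0 < τcom) (hsub : 0 < τsub)
    (δ : ℝ) (hδ : δ = a / (3 * c * d))
    (mem : ℕ → ℝ → Set (EuclideanSpace ℝ (Fin d)))
    (hmem : ∀ i τ, 0 ≤ τ →
      mem i τ ⊆ {0} ∪ memloc d τsub (oracleH d n a δ) mem i τ ∪ memcom d n τcom mem i τ)
    (p : EuclideanSpace ℝ (Fin d) → ℝ)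
    (hp : ∀ x, p x =
      (a / 3) * ∑ j ∈ Finset.Icc 1 (d - 1), |⟪stdBasis d j - stdBasis d (j - 1), x⟫|
        - (a / 3) * ⟪stdBasis d 0, x⟫ + c * huber d δ x)
    (xstar : EuclideanSpace ℝ (Fin d))
    (hxstar : xstar = (WithLp.equiv 2 (Fin d → ℝ)).symm fun _ => a / (3 * c * d)) :
    ∀ i, 1 ≤ i → i ≤ n → ∀ τ : ℝ, 0 ≤ τ → τ < τcom * (n * (d - 1) : ℕ) / 6 →
      ∀ x ∈ mem i τ, a ^ 2 / (18 * c * d) ≤ p x - p xstar := by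
  obtain ⟨m, rfl⟩ := hn3
  intro i hi₁ hin τ hτ hT x hx
  have hm : 1 ≤ m := by omega
  have hδ₀ : 0 ≤ δ := hδ ▸ by positivity
  have hw : 2 * ⌊τ / τcom⌋₊ < m * (d - 1) := by
    have hfloor : (⌊τ / τcom⌋₊ : ℝ) * τcom ≤ τ :=
      (le_div_iff₀ hcom).1 (Nat.floor_le (div_nonneg hτ hcom.le))
    simp only [Nat.cast_mul, Nat.cast_ofNat] at hT
    have : ((2 * ⌊τ / τcom⌋₊ : ℕ) : ℝ) * τcom < ((m * (d - 1) : ℕ) : ℝ) * τcom := by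
      push_cast
      linarith
    exact_mod_cast lt_of_mul_lt_mul_right this hcom.le
  have hxK : x ∈ prefixSpan d (d - 1) := prefixSpan_mono d (level_le_sub_one hm hd hw)
    (mem_subset_prefixSpan_level hm hcom hsub hmem hin hτ hx)
  have hobj : p = objective d a c δ := funext hp
  have hpstar : p xstar = -(a ^ 2 / (18 * c * d)) := by
    rw [hobj, hxstar, ← hδ, objective_const (by omega) a c hδ₀, hδ]
    field_simp
    ring
  have hpx : 0 ≤ p x := hobj ▸ objective_nonneg ha.le hc.le hδ₀ hxK
  linarith

theorem stmt11 (d n : ℕ) (hd : 3 ≤ d) (hodd : d % 2 = 1) (hn : 3 ≤ n) (hn3 : 3 ∣ n)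
    (a c τcom τsub : ℝ) (ha : 0 < a) (hc : 0 < c) (hcom : 0 < τcom) (hsub : 0 < τsub)
    (δ : ℝ) (hδ : δ = a / (3 * c * d))
    (mem : ℕ → ℝ → Set (EuclideanSpace ℝ (Fin d)))
    (hmem0 : ∀ i, mem i 0 = {0})
    (hmem : ∀ i τ, 0 ≤ τ →
      mem i τ ⊆ {0} ∪ memloc d τsub (oracleH d n a δ) mem i τ ∪ memcom d n τcom mem i τ)
    (p : EuclideanSpace ℝ (Fin d) → ℝ)
    (hp : ∀ x, p x =
      (a / 3) * ∑ j ∈ Finset.Icc 1 (d - 1), |⟪stdBasis d j - stdBasis d (j - 1), x⟫|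
        - (a / 3) * ⟪stdBasis d 0, x⟫ + c * huber d δ x)
    (xstar : EuclideanSpace ℝ (Fin d))
    (hxstar : xstar = (WithLp.equiv 2 (Fin d → ℝ)).symm fun _ => a / (3 * c * d)) :
    ∀ i, 1 ≤ i → i ≤ n → ∀ τ : ℝ, 0 ≤ τ → τ < τcom * (n * (d - 1) : ℕ) / 6 →
      ∀ x ∈ mem i τ, a ^ 2 / (18 * c * d) ≤ p x - p xstar :=
  stmt11_general d n hd hn3 a c τcom τsub ha hc hcom hsub δ hδ mem hmem p hp xstar hxstar

end
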